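/- Let F be a closed transitive relation on a locally compact, σ-compact Hausdorff space X, and let A, B be disjoint closed subsets of X with F(A) ⊆ A and F⁻¹(B) ⊆ B. Then there exists a continuous function L : X → [0,1] such that (x,y) ∈ F implies L(x) ≤ L(y), L(x) = 1 for all x ∈ A, and L(x) = 0 for all x ∈ B. -/

import Mathlib

/-!
Run the proof of Urysohn's lemma (`Urysohns.CU`) with every open set `U` of the dyadic construction
backward invariant, `F⁻¹(U) ⊆ U`: each approximation, built from indicators of the sets `Uᶜ`, is
then monotone along `F`, and so is the limit. Splitting a pair `C ⊆ U` needs ordered normality: a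
closed forward invariant set and a disjoint closed backward invariant set have disjoint invariant
open neighbourhoods. As `L ∪ F(L)` is closed and forward invariant for compact `L`, a compact
neighbourhood of `C ∩ Kₙ` can be swallowed into `C`, alternately on both sides, along a compact
exhaustion `Kₙ`; the unions of the resulting increasing sequences are the neighbourhoods.
-/

/-- The image of a set `A` under a relation `f ⊆ X × Y`. -/
def relImage {X Y : Type*} (f : Set (X × Y)) (A : Set X) : Set Y :=
  {y | ∃ x ∈ A, (x, y) ∈ f}

/-- The reverse (inverse) relation of `f ⊆ X × Y`. -/
def relInv {X Y : Type*} (f : Set (X × Y)) : Set (Y × X) :=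
  {p | (p.2, p.1) ∈ f}

/-- Composition of relations: `relComp g f = g ∘ f` (first `f`, then `g`). -/
def relComp {X Y Z : Type*} (g : Set (Y × Z)) (f : Set (X × Y)) : Set (X × Z) :=
  {p | ∃ y, (p.1, y) ∈ f ∧ (y, p.2) ∈ g}

/-- A relation on `X` is transitive. -/
def RelTrans {X : Type*} (f : Set (X × X)) : Prop :=
  ∀ x y z : X, (x, y) ∈ f → (y, z) ∈ f → (x, z) ∈ f

/-- `gRel f` is the smallest closed transitive relation containing `f`:
the intersection of all closed transitive relations containing `f`. -/
def gRel {X : Type*} [TopologicalSpace X] (f : Set (X × X)) : Set (X × X) :=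
  ⋂₀ {g : Set (X × X) | f ⊆ g ∧ IsClosed g ∧ RelTrans g}

open Set

section

variable {X : Type*} {R : Set (X × X)}

theorem RelTrans.relInv (hR : RelTrans R) : RelTrans (relInv R) :=
  fun x y z hxy hyz => hR z y x hyz hxy

theorem relImage_relInv_compl_subset {S : Set X} (h : relImage R S ⊆ S) :
    relImage (relInv R) Sᶜ ⊆ Sᶜ :=
  fun _ ⟨_, hy, hxy⟩ hx => hy (h ⟨_, hx, hxy⟩)

theorem disjoint_relImage {L D : Set X} (hD : relImage (relInv R) D ⊆ D) (hLD : Disjoint L D) :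
    Disjoint (relImage R L) D :=
  disjoint_left.2 fun _ ⟨_, hx, hxy⟩ hy => disjoint_left.1 hLD hx (hD ⟨_, hy, hxy⟩)

variable [TopologicalSpace X]

theorem isClosed_relInv {Y : Type*} [TopologicalSpace Y] {f : Set (X × Y)} (hf : IsClosed f) :
    IsClosed (relInv f) :=
  hf.preimage continuous_swap

theorem isClosed_relImage {Y : Type*} [TopologicalSpace Y] {f : Set (X × Y)} (hf : IsClosed f)
    {K : Set X} (hK : IsCompact K) : IsClosed (relImage f K) := by
  have : CompactSpace K := isCompact_iff_compactSpace.mp hK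
  have hfK : IsClosed {p : K × Y | ((p.1 : X), p.2) ∈ f} := hf.preimage (by fun_prop)
  convert isClosedMap_snd_of_compactSpace _ hfK
  ext y
  simp [relImage]

theorem isOpen_iUnion_of_inter_subset_interior {s K : ℕ → Set X} (hs : Monotone s)
    (hK : Monotone K) (hcover : ⋃ n, K n = univ) (h : ∀ n, s n ∩ K n ⊆ interior (s (n + 1))) :
    IsOpen (⋃ n, s n) := by
  refine isOpen_iff_mem_nhds.2 fun x hx => ?_
  obtain ⟨n, hn⟩ := mem_iUnion.1 hx
  obtain ⟨m, hm⟩ := mem_iUnion.1 (hcover ▸ mem_univ x)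
  have hx' : x ∈ interior (s (max n m + 1)) :=
    h _ ⟨hs (le_max_left n m) hn, hK (le_max_right n m) hm⟩
  exact Filter.mem_of_superset (mem_interior_iff_mem_nhds.1 hx') (subset_iUnion s _)

structure IsInvariantPair (R : Set (X × X)) (C D : Set X) : Prop where
  isClosed_left : IsClosed C
  isClosed_right : IsClosed D
  invariant_left : relImage R C ⊆ C
  invariant_right : relImage (relInv R) D ⊆ D
  disjoint : Disjoint C D

namespace IsInvariantPair

variable {C D : Set X}

theorem swap (h : IsInvariantPair R C D) : IsInvariantPair (relInv R) D C :=
  ⟨h.isClosed_right, h.isClosed_left, h.invariant_right, h.invariant_left, h.disjoint.symm⟩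

variable [LocallyCompactSpace X] [T2Space X]

theorem exists_enlarge_left (hR : IsClosed R) (hRt : RelTrans R) (h : IsInvariantPair R C D)
    {M : Set X} (hM : IsCompact M) (hMD : Disjoint M D) :
    ∃ C', IsInvariantPair R C' D ∧ C ⊆ C' ∧ M ⊆ interior C' := by
  obtain ⟨L, hL, hML, hLD⟩ := exists_compact_between hM h.isClosed_right.isOpen_compl
    (subset_compl_iff_disjoint_right.2 hMD)
  have hLD : Disjoint L D := subset_compl_iff_disjoint_right.1 hLD
  refine ⟨C ∪ L ∪ relImage R L, ⟨?_, h.isClosed_right, ?_, h.invariant_right, ?_⟩,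
    subset_union_left.trans subset_union_left,
    hML.trans (interior_mono (subset_union_right.trans subset_union_left))⟩
  · exact (h.isClosed_left.union hL.isClosed).union (isClosed_relImage hR hL)
  · rintro y ⟨x, (hx | hx) | ⟨w, hw, hwx⟩, hxy⟩
    · exact Or.inl (Or.inl (h.invariant_left ⟨x, hx, hxy⟩))
    · exact Or.inr ⟨x, hx, hxy⟩
    · exact Or.inr ⟨w, hw, hRt _ _ _ hwx hxy⟩
  · exact disjoint_union_left.2
      ⟨disjoint_union_left.2 ⟨h.disjoint, hLD⟩, disjoint_relImage h.invariant_right hLD⟩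

theorem exists_enlarge (hR : IsClosed R) (hRt : RelTrans R) (h : IsInvariantPair R C D)
    {M N : Set X} (hM : IsCompact M) (hMC : M ⊆ C) (hN : IsCompact N) (hND : N ⊆ D) :
    ∃ C' D', IsInvariantPair R C' D' ∧ C ⊆ C' ∧ D ⊆ D' ∧ M ⊆ interior C' ∧ N ⊆ interior D' := by
  obtain ⟨C', hC', hCC', hMC'⟩ := h.exists_enlarge_left hR hRt hM (h.disjoint.mono_left hMC)
  obtain ⟨D', hD', hDD', hND'⟩ := hC'.swap.exists_enlarge_left (isClosed_relInv hR) hRt.relInv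
    hN (hC'.disjoint.symm.mono_left hND)
  exact ⟨C', D', hD'.swap, hCC', hDD', hMC', hND'⟩

theorem exists_isOpen_invariant [SigmaCompactSpace X] (hR : IsClosed R) (hRt : RelTrans R)
    (h : IsInvariantPair R C D) :
    ∃ U V : Set X, IsOpen U ∧ IsOpen V ∧ C ⊆ U ∧ D ⊆ V ∧ Disjoint U V ∧
      relImage R U ⊆ U ∧ relImage (relInv R) V ⊆ V := by
  have step (n : ℕ) (p : {p : Set X × Set X // IsInvariantPair R p.1 p.2}) :
      ∃ q : {p : Set X × Set X // IsInvariantPair R p.1 p.2}, p.1 ≤ q.1 ∧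
        p.1.1 ∩ compactCovering X n ⊆ interior q.1.1 ∧
        p.1.2 ∩ compactCovering X n ⊆ interior q.1.2 := by
    have hK := isCompact_compactCovering X n
    obtain ⟨C', D', hq, hCC', hDD', hC', hD'⟩ := p.2.exists_enlarge hR hRt
      (hK.inter_left p.2.isClosed_left) inter_subset_left
      (hK.inter_left p.2.isClosed_right) inter_subset_left
    exact ⟨⟨(C', D'), hq⟩, ⟨hCC', hDD'⟩, hC', hD'⟩
  choose next hle hC hD using step
  let seq (n : ℕ) : {p : Set X × Set X // IsInvariantPair R p.1 p.2} :=
    Nat.rec ⟨(C, D), h⟩ next n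
  have hCmono : Monotone fun n => (seq n).1.1 :=
    monotone_nat_of_le_succ fun n => (hle n (seq n)).1
  have hDmono : Monotone fun n => (seq n).1.2 :=
    monotone_nat_of_le_succ fun n => (hle n (seq n)).2
  have hKmono : Monotone (compactCovering X) := compactCovering_subset X
  refine ⟨⋃ n, (seq n).1.1, ⋃ n, (seq n).1.2,
    isOpen_iUnion_of_inter_subset_interior hCmono hKmono (iUnion_compactCovering X)
      fun n => hC n (seq n),
    isOpen_iUnion_of_inter_subset_interior hDmono hKmono (iUnion_compactCovering X)
      fun n => hD n (seq n),
    subset_iUnion (fun n => (seq n).1.1) 0, subset_iUnion (fun n => (seq n).1.2) 0, ?_, ?_, ?_⟩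
  · exact disjoint_iUnion_left.2 fun n => disjoint_iUnion_right.2 fun m =>
      (seq (max n m)).2.disjoint.mono (hCmono (le_max_left n m)) (hDmono (le_max_right n m))
  · rintro y ⟨x, hx, hxy⟩
    obtain ⟨n, hn⟩ := mem_iUnion.1 hx
    exact mem_iUnion.2 ⟨n, (seq n).2.invariant_left ⟨x, hn, hxy⟩⟩
  · rintro y ⟨x, hx, hxy⟩
    obtain ⟨n, hn⟩ := mem_iUnion.1 hx
    exact mem_iUnion.2 ⟨n, (seq n).2.invariant_right ⟨x, hn, hxy⟩⟩

end IsInvariantPair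

/-- The closure of an invariant open set need not be invariant, so a closed invariant set between
`c` and `u` is carried along instead. -/
def InvariantSandwich (R : Set (X × X)) (c u : Set X) : Prop :=
  relImage R u ⊆ u ∧ ∃ d, IsClosed d ∧ relImage R d ⊆ d ∧ c ⊆ d ∧ d ⊆ u

theorem InvariantSandwich.exists_split [LocallyCompactSpace X] [SigmaCompactSpace X] [T2Space X]
    (hR : IsClosed R) (hRt : RelTrans R) {c u : Set X} (hcu : InvariantSandwich R c u)
    (hu : IsOpen u) :
    ∃ v, IsOpen v ∧ c ⊆ v ∧ closure v ⊆ u ∧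
      InvariantSandwich R c v ∧ InvariantSandwich R (closure v) u := by
  obtain ⟨hu_inv, d, hd, hd_inv, hcd, hdu⟩ := hcu
  have hpair : IsInvariantPair R d uᶜ :=
    ⟨hd, hu.isClosed_compl, hd_inv, relImage_relInv_compl_subset hu_inv,
      disjoint_compl_right_iff_subset.2 hdu⟩
  obtain ⟨v, w, hv, hw, hdv, huw, hvw, hv_inv, hw_inv⟩ := hpair.exists_isOpen_invariant hR hRt
  have hvw' : closure v ⊆ wᶜ :=
    closure_minimal (subset_compl_iff_disjoint_right.2 hvw) hw.isClosed_compl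
  have hwu : wᶜ ⊆ u := compl_subset_comm.1 huw
  exact ⟨v, hv, hcd.trans hdv, hvw'.trans hwu, ⟨hv_inv, d, hd, hd_inv, hcd, hdv⟩,
    ⟨hu_inv, wᶜ, hw.isClosed_compl, relImage_relInv_compl_subset hw_inv, hvw', hwu⟩⟩

theorem Urysohns.CU.lim_le_lim_of_rel {P : Set X → Set X → Prop}
    (hP : ∀ {c u}, P c u → relImage R u ⊆ u) (c : Urysohns.CU P) {x y : X} (hxy : (x, y) ∈ R) :
    c.lim y ≤ c.lim x := by
  have happrox (n : ℕ) (c : Urysohns.CU P) : c.approx n y ≤ c.approx n x := by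
    induction n generalizing c with
    | zero =>
      by_cases hx : x ∈ c.U
      · have hy : y ∉ c.Uᶜ := not_not_intro (hP c.P_C_U ⟨x, hx, hxy⟩)
        exact (indicator_of_notMem hy _).trans_le (c.approx_nonneg 0 x)
      · exact (c.approx_le_one 0 y).trans_eq (c.approx_of_notMem_U 0 hx).symm
    | succ n ih => exact midpoint_le_midpoint (ih c.left) (ih c.right)
  exact ciSup_le fun n => (happrox n c).trans (c.approx_le_lim x n)

end

/-- Urysohn lemma for Lyapunov functions: Let `F` be a closed transitive
relation on a locally compact, σ-compact Hausdorff space `X`, and `A, B` disjoint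
closed sets with `F(A) ⊆ A` and `F⁻¹(B) ⊆ B`.  Then there is a continuous Lyapunov
function `L : X → [0,1]` for `F` with `L = 1` on `A` and `L = 0` on `B`. -/
theorem lyapunov_urysohn
    {X : Type*} [TopologicalSpace X] [LocallyCompactSpace X]
    [SigmaCompactSpace X] [T2Space X]
    (F : Set (X × X)) (hF : IsClosed F) (hFt : RelTrans F)
    (A B : Set X) (hA : IsClosed A) (hB : IsClosed B) (hAB : Disjoint A B)
    (hAinv : relImage F A ⊆ A) (hBinv : relImage (relInv F) B ⊆ B) :
    ∃ L : X → ℝ, Continuous L ∧ (∀ x : X, L x ∈ Set.Icc (0:ℝ) 1) ∧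
      (∀ x y : X, (x, y) ∈ F → L x ≤ L y) ∧
      (∀ x ∈ A, L x = 1) ∧ (∀ x ∈ B, L x = 0) := by
  let c : Urysohns.CU (InvariantSandwich (relInv F)) :=
    { C := B
      U := Aᶜ
      P_C_U := ⟨relImage_relInv_compl_subset hAinv, B, hB, hBinv, subset_rfl,
        subset_compl_iff_disjoint_left.2 hAB⟩
      closed_C := hB
      open_U := hA.isOpen_compl
      subset := subset_compl_iff_disjoint_left.2 hAB
      hP := fun _ hcu hu _ => hcu.exists_split (isClosed_relInv hF) hFt.relInv hu }
  exact ⟨c.lim, c.continuous_lim, c.lim_mem_Icc, fun x y hxy => c.lim_le_lim_of_rel And.left hxy,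
    fun x hx => c.lim_of_notMem_U x (not_not_intro hx), c.lim_of_mem_C⟩
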